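/- arXiv:2110.09330 — 2 statements merged into one kernel-verified Lean document; each statement's English description precedes it below -/
import Mathlib

section
/- Let q ≥ 2 and n ≥ 7 with n odd, and suppose T is a natural number such that q^{3(n−4)}·T = Σ_τ x_τ·(q^{n−3}−1)/(q−1), where each x_τ = 1 + C_τ/((q^{n−2}−1)/(q−1)) with C_τ ∈ ℕ and the sum Σ_τ C_τ is divisible by (q^{n−2}−1)/(q−1). Then T ≡ 0 (mod q+1). -/
/-! Modulo `q + 1` we have `q ≡ -1`, so `1 + q + ⋯ + q^(m-1)` is `0` for even `m` and `1` for
odd `m`. Since `n - 3` is even, every summand on the right of `hcount` vanishes; since `n - 2` is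
odd, the left side reduces to `q^(3(n-4)) * T`, and `q` is a unit modulo `q + 1`. -/

open Finset

theorem Nat.cast_geom_sum_zmod_add_one (q m : ℕ) :
    ((∑ i ∈ range m, q ^ i : ℕ) : ZMod (q + 1)) = if Even m then 0 else 1 := by
  have hq : (q : ZMod (q + 1)) = -1 :=
    eq_neg_of_add_eq_zero_left (by exact_mod_cast ZMod.natCast_self (q + 1))
  push_cast
  rw [hq, neg_one_geom_sum]

theorem Nat.add_one_dvd_geom_sum_of_even (q : ℕ) {m : ℕ} (hm : Even m) :
    q + 1 ∣ ∑ i ∈ range m, q ^ i := by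
  rw [← ZMod.natCast_eq_zero_iff, Nat.cast_geom_sum_zmod_add_one, if_pos hm]

theorem Nat.coprime_geom_sum_of_odd (q : ℕ) {m : ℕ} (hm : Odd m) :
    Coprime (∑ i ∈ range m, q ^ i) (q + 1) := by
  rw [← ZMod.isUnit_iff_coprime, Nat.cast_geom_sum_zmod_add_one,
    if_neg (Nat.not_even_iff_odd.mpr hm)]
  exact isUnit_one

theorem stmt_7_general (q n T : ℕ) (hn : 7 ≤ n) (hodd : Odd n)
    {S : Type*} [Fintype S] (C : S → ℕ)
    (hcount : q ^ (3 * (n - 4)) * T * ∑ i ∈ Finset.range (n - 2), q ^ i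
        = ∑ τ : S, ((∑ i ∈ Finset.range (n - 2), q ^ i) + C τ)
            * ∑ i ∈ Finset.range (n - 3), q ^ i) :
    T ≡ 0 [MOD q + 1] := by
  obtain ⟨k, hk⟩ := hodd
  have hlhs : q + 1 ∣ q ^ (3 * (n - 4)) * T * ∑ i ∈ range (n - 2), q ^ i := by
    have heven : q + 1 ∣ ∑ i ∈ range (n - 3), q ^ i :=
      Nat.add_one_dvd_geom_sum_of_even q ⟨k - 1, by omega⟩
    rw [hcount]
    exact dvd_sum fun τ _ ↦ dvd_mul_of_dvd_right heven _
  have hgeom : Nat.Coprime (∑ i ∈ range (n - 2), q ^ i) (q + 1) :=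
    Nat.coprime_geom_sum_of_odd q ⟨k - 1, by omega⟩
  have hpow : Nat.Coprime (q ^ (3 * (n - 4))) (q + 1) :=
    (Nat.coprime_self_add_right.mpr (Nat.coprime_one_right q)).pow_left _
  exact Nat.modEq_zero_iff_dvd.mpr
    (hpow.symm.dvd_of_dvd_mul_left (hgeom.symm.dvd_of_dvd_mul_right hlhs))

/-- If `q^(3(n-4)) * T = Σ_τ x_τ * (q^(n-3)-1)/(q-1)` with
`x_τ = 1 + C_τ / ((q^(n-2)-1)/(q-1))` (cleared of denominators below) and
`(q^(n-2)-1)/(q-1) ∣ Σ_τ C_τ`, then `T ≡ 0 (mod q+1)`. -/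
theorem stmt_7 (q n T : ℕ) (hq : 2 ≤ q) (hn : 7 ≤ n) (hodd : Odd n)
    {S : Type*} [Fintype S] (C : S → ℕ)
    (hcount : q ^ (3 * (n - 4)) * T * ∑ i ∈ Finset.range (n - 2), q ^ i
        = ∑ τ : S, ((∑ i ∈ Finset.range (n - 2), q ^ i) + C τ)
            * ∑ i ∈ Finset.range (n - 3), q ^ i)
    (hdvd : (∑ i ∈ Finset.range (n - 2), q ^ i) ∣ ∑ τ : S, C τ) :
    T ≡ 0 [MOD q + 1] :=
  stmt_7_general q n T hn hodd C hcount
end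

section
/- Let q be a prime power, m an integer with 0 ≤ m, and j, n with m + j < n. The number of j-dimensional projective subspaces of PG(n,q) disjoint from a fixed m-dimensional subspace equals q^{(m+1)(j+1)} · [n−m choose j+1]_q, where [·]_q is the Gaussian binomial coefficient. -/
/-!
Choose a complement `C` of `W`, so that the ambient space is `C × W`. A subspace meeting `0 × W`
trivially is the graph of a unique partial linear map `C →ₗ.[K] W`, whose domain has the same
dimension as the graph. Partial linear maps with a `d`-dimensional domain are pairs `(X, f)`
with `X ≤ C`, `dim X = d` and `f : X →ₗ[K] W`; there are `q ^ (dim W * d)` choices of `f` for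
each `X`, and `C ≅ K^(n-m)`.
-/

open Module LinearMap

section Graph

variable {R E F : Type*} [Ring R] [AddCommGroup E] [Module R E] [AddCommGroup F] [Module R F]

theorem Submodule.inf_ker_fst_eq_bot_iff {g : Submodule R (E × F)} :
    g ⊓ ker (LinearMap.fst R E F) = ⊥ ↔ ∀ x ∈ g, x.1 = 0 → x.2 = 0 := by
  simp only [Submodule.eq_bot_iff, Submodule.mem_inf, mem_ker, fst_apply, and_imp]
  exact ⟨fun h x hx hx₁ => congrArg Prod.snd (h x hx hx₁),
    fun h x hx hx₁ => Prod.ext hx₁ (h x hx hx₁)⟩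

namespace LinearPMap

def equivSigma : (E →ₗ.[R] F) ≃ Σ X : Submodule R E, X →ₗ[R] F where
  toFun f := ⟨f.domain, f.toFun⟩
  invFun p := ⟨p.1, p.2⟩
  left_inv _ := rfl
  right_inv _ := rfl

theorem graph_inf_ker_fst (f : E →ₗ.[R] F) : f.graph ⊓ ker (fst R E F) = ⊥ :=
  Submodule.inf_ker_fst_eq_bot_iff.2 fun _ hx hx₁ => f.graph_fst_eq_zero_snd hx hx₁

noncomputable def equivGraph :
    (E →ₗ.[R] F) ≃ {g : Submodule R (E × F) // g ⊓ ker (fst R E F) = ⊥} where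
  toFun f := ⟨f.graph, f.graph_inf_ker_fst⟩
  invFun g := g.1.toLinearPMap
  left_inv f := eq_of_eq_graph <|
    Submodule.toLinearPMap_graph_eq _ (Submodule.inf_ker_fst_eq_bot_iff.1 f.graph_inf_ker_fst)
  right_inv g := Subtype.ext <|
    Submodule.toLinearPMap_graph_eq _ (Submodule.inf_ker_fst_eq_bot_iff.1 g.2)

theorem graph_eq_range (f : E →ₗ.[R] F) :
    f.graph = range (f.domain.subtype.prod f.toFun) := by
  ext x
  simp [eq_comm, Prod.ext_iff]

theorem finrank_graph [StrongRankCondition R] (f : E →ₗ.[R] F) :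
    finrank R f.graph = finrank R f.domain := by
  rw [graph_eq_range]
  exact finrank_range_of_inj fun x y h => Subtype.ext (congrArg Prod.fst h)

end LinearPMap

end Graph

section Counting

variable {K E F : Type*} [Field K] [AddCommGroup E] [Module K E] [FiniteDimensional K E]
  [AddCommGroup F] [Module K F] [FiniteDimensional K F]

theorem Module.natCard_linearMap :
    Nat.card (E →ₗ[K] F) = Nat.card K ^ (finrank K F * finrank K E) := by
  rw [natCard_eq_pow_finrank (K := K), finrank_linearMap, mul_comm]

theorem LinearPMap.natCard_finrank_domain_eq [Finite K] (d : ℕ) :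
    Nat.card {f : E →ₗ.[K] F // finrank K f.domain = d}
      = Nat.card K ^ (finrank K F * d) * Nat.card {X : Submodule K E // finrank K X = d} := by
  have : Finite E := Module.finite_of_finite K
  have (X : Submodule K E) : Finite (X →ₗ[K] F) := Module.finite_of_finite K
  have : Fintype {X : Submodule K E // finrank K X = d} := Fintype.ofFinite _
  rw [Nat.card_congr ((Equiv.subtypeEquiv (p := fun f : E →ₗ.[K] F => finrank K f.domain = d)
    LinearPMap.equivSigma fun _ => Iff.rfl).trans
    (Equiv.subtypeSigmaEquiv _ fun X : Submodule K E => finrank K X = d)), Nat.card_sigma,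
    Finset.sum_const_nat fun X _ => by rw [natCard_linearMap, X.2], Finset.card_univ,
    ← Nat.card_eq_fintype_card, mul_comm]

theorem Submodule.natCard_finrank_eq_inf_ker_fst_eq_bot [Finite K] (d : ℕ) :
    Nat.card {g : Submodule K (E × F) // finrank K g = d ∧ g ⊓ ker (LinearMap.fst K E F) = ⊥}
      = Nat.card K ^ (finrank K F * d) * Nat.card {X : Submodule K E // finrank K X = d} := by
  rw [← LinearPMap.natCard_finrank_domain_eq]
  symm
  refine Nat.card_congr <| (Equiv.subtypeEquiv
    (q := fun g : {g : Submodule K (E × F) // g ⊓ ker (LinearMap.fst K E F) = ⊥} =>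
      finrank K g.1 = d)
    LinearPMap.equivGraph fun f => by rw [← f.finrank_graph]; rfl).trans <|
    (Equiv.subtypeSubtypeEquivSubtypeInter (fun g => g ⊓ ker (LinearMap.fst K E F) = ⊥)
      (fun g => finrank K g = d)).trans (Equiv.subtypeEquivRight fun _ => and_comm)

end Counting

namespace Submodule

variable {K M N : Type*} [Field K] [AddCommGroup M] [Module K M] [AddCommGroup N] [Module K N]

theorem natCard_finrank_eq_congr (e : M ≃ₗ[K] N) (d : ℕ) :
    Nat.card {U : Submodule K M // finrank K U = d}
      = Nat.card {U : Submodule K N // finrank K U = d} :=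
  Nat.card_congr <| Equiv.subtypeEquiv (orderIsoMapComap e).toEquiv fun U => by
    rw [OrderIso.coe_toEquiv, orderIsoMapComap_apply, LinearEquiv.finrank_map_eq]

theorem natCard_finrank_eq_inf_eq_bot_congr (e : M ≃ₗ[K] N) (W : Submodule K M) (d : ℕ) :
    Nat.card {U : Submodule K M // finrank K U = d ∧ U ⊓ W = ⊥}
      = Nat.card {U : Submodule K N // finrank K U = d ∧ U ⊓ W.map e.toLinearMap = ⊥} :=
  Nat.card_congr <| Equiv.subtypeEquiv (orderIsoMapComap e).toEquiv fun U => by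
    rw [OrderIso.coe_toEquiv, orderIsoMapComap_apply, LinearEquiv.finrank_map_eq,
      ← map_inf _ e.injective, Submodule.map_eq_bot_iff]

theorem natCard_finrank_eq_inf_eq_bot_of_isCompl [Finite K] [FiniteDimensional K M]
    {C W : Submodule K M} (h : IsCompl C W) (d : ℕ) :
    Nat.card {U : Submodule K M // finrank K U = d ∧ U ⊓ W = ⊥}
      = Nat.card K ^ (finrank K W * d) * Nat.card {X : Submodule K C // finrank K X = d} := by
  have hW : (ker (LinearMap.fst K C W)).map (prodEquivOfIsCompl C W h).toLinearMap = W := by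
    ext x
    simp
  conv_lhs => rw [← hW]
  rw [← natCard_finrank_eq_inf_eq_bot_congr, natCard_finrank_eq_inf_ker_fst_eq_bot]

end Submodule

theorem stmt_11_general (q n m j : ℕ) (K : Type*) [Field K] [Fintype K]
    (hK : Fintype.card K = q)
    (W : Submodule K (Fin (n + 1) → K)) (hW : Module.finrank K W = m + 1) :
    Nat.card {U : Submodule K (Fin (n + 1) → K) //
        Module.finrank K U = j + 1 ∧ U ⊓ W = ⊥}
      = q ^ ((m + 1) * (j + 1))
        * Nat.card {U : Submodule K (Fin (n - m) → K) // Module.finrank K U = j + 1} := by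
  obtain ⟨C, hC⟩ := W.exists_isCompl
  have hCW := Submodule.finrank_add_eq_of_isCompl hC
  rw [finrank_fin_fun, hW] at hCW
  have eC : C ≃ₗ[K] (Fin (n - m) → K) := LinearEquiv.ofFinrankEq _ _ (by rw [finrank_fin_fun]; omega)
  rw [Submodule.natCard_finrank_eq_inf_eq_bot_of_isCompl hC.symm, hW, Nat.card_eq_fintype_card,
    hK, Submodule.natCard_finrank_eq_congr eC]

/-- Segre's formula: over a finite field `K` with `q` elements, the number of
`j`-dimensional projective subspaces of `PG(n,q)` disjoint from a fixed
`m`-dimensional projective subspace equals `q^((m+1)(j+1))` times the Gaussian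
binomial `[n-m choose j+1]_q`, realised here as the number of
`(j+1)`-dimensional linear subspaces of `K^(n-m)`. -/
theorem stmt_11 (q n m j : ℕ) (K : Type*) [Field K] [Fintype K]
    (hK : Fintype.card K = q) (h : m + j < n)
    (W : Submodule K (Fin (n + 1) → K)) (hW : Module.finrank K W = m + 1) :
    Nat.card {U : Submodule K (Fin (n + 1) → K) //
        Module.finrank K U = j + 1 ∧ U ⊓ W = ⊥}
      = q ^ ((m + 1) * (j + 1))
        * Nat.card {U : Submodule K (Fin (n - m) → K) // Module.finrank K U = j + 1} :=
  stmt_11_general q n m j K hK W hW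
end
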